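/- arXiv:1203.1210 — 3 statements merged into one kernel-verified Lean document; each statement's English description precedes it below -/
import Mathlib

section
/- Suppose a is a positive scalar function, b a vector field, and v₁,…,vₙ satisfy Δv_j + (b/a)·∇v_j = 0 on X, with (∇v₁,…,∇vₙ) a basis of ℝⁿ at each point. Then the vector field a⁻¹b is uniquely determined by the explicit formula a⁻¹b = −Σ_{i,j} H^{ij} (Δv_j) ∇v_i, where H_{ij} = ∇v_i·∇v_j and H^{ij} are the entries of H⁻¹. -/
open Matrix Finset

variable {n : ℕ}

/-- Partial derivative in direction `i`. -/
noncomputable def pd (i : Fin n) (f : (Fin n → ℝ) → ℝ) (x : Fin n → ℝ) : ℝ :=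
  fderiv ℝ f x (Pi.single i 1)

/-- Gradient. -/
noncomputable def grad (f : (Fin n → ℝ) → ℝ) (x : Fin n → ℝ) : Fin n → ℝ :=
  fun i => pd i f x

/-- Hessian matrix. -/
noncomputable def hess (f : (Fin n → ℝ) → ℝ) (x : Fin n → ℝ) : Matrix (Fin n) (Fin n) ℝ :=
  Matrix.of fun i j => pd i (pd j f) x

/-- Divergence of a vector field. -/
noncomputable def vdiv (F : (Fin n → ℝ) → (Fin n → ℝ)) (x : Fin n → ℝ) : ℝ :=
  ∑ i, pd i (fun y => F y i) x

/-- Row-wise divergence of a matrix field. -/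
noncomputable def mdiv (A : (Fin n → ℝ) → Matrix (Fin n) (Fin n) ℝ) (x : Fin n → ℝ) :
    Fin n → ℝ :=
  fun i => ∑ j, pd j (fun y => A y i j) x

/-- Laplacian. -/
noncomputable def lap (f : (Fin n → ℝ) → ℝ) (x : Fin n → ℝ) : ℝ :=
  ∑ i, pd i (pd i f) x

/-- explicit reconstruction of `a⁻¹ b` from solutions of
`Δv_j + (b/a)·∇v_j = 0` with gradients forming a basis. -/
theorem stmt3 {n : ℕ} (X : Set (Fin n → ℝ)) (hX : IsOpen X)
    (a : (Fin n → ℝ) → ℝ) (ha : ∀ x ∈ X, 0 < a x)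
    (b : (Fin n → ℝ) → (Fin n → ℝ))
    (v : Fin n → (Fin n → ℝ) → ℝ)
    (hv : ∀ j, ContDiffOn ℝ 2 (v j) X)
    (heq : ∀ j, ∀ x ∈ X, lap (v j) x + ((a x)⁻¹ • b x) ⬝ᵥ grad (v j) x = 0)
    (hbasis : ∀ x ∈ X, LinearIndependent ℝ (fun i => grad (v i) x)) :
    ∀ x ∈ X,
      (a x)⁻¹ • b x =
        - ∑ i, ∑ j,
          ((Matrix.of fun i j => grad (v i) x ⬝ᵥ grad (v j) x)⁻¹ i j
            * lap (v j) x) • grad (v i) x := by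
  intro x hx
  set β := (a x)⁻¹ • b x with hβ
  set G : Matrix (Fin n) (Fin n) ℝ := Matrix.of (fun i k => grad (v i) x k) with hG
  have hGunit : IsUnit G := by
    rw [← Matrix.linearIndependent_rows_iff_isUnit]
    exact hbasis x hx
  have hGTunit : IsUnit Gᵀ := (Matrix.isUnit_transpose _).2 hGunit
  have hH : (Matrix.of fun i j => grad (v i) x ⬝ᵥ grad (v j) x) = G * Gᵀ := by
    ext i j
    simp [Matrix.mul_apply, dotProduct, hG, Matrix.transpose_apply]
  have hc : G.mulVec β = fun j => -lap (v j) x := by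
    funext j
    have := heq j x hx
    have h2 : β ⬝ᵥ grad (v j) x = -lap (v j) x := by linarith
    rw [← h2]
    simp [Matrix.mulVec, dotProduct, hG, mul_comm]
  have key : Gᵀ * (G * Gᵀ)⁻¹ * G = 1 := by
    rw [Matrix.mul_inv_rev]
    calc Gᵀ * (Gᵀ⁻¹ * G⁻¹) * G = (Gᵀ * Gᵀ⁻¹) * (G⁻¹ * G) := by
          rw [Matrix.mul_assoc, Matrix.mul_assoc, Matrix.mul_assoc]
      _ = 1 := by rw [Matrix.mul_nonsing_inv _ ((Matrix.isUnit_iff_isUnit_det _).mp hGTunit), Matrix.nonsing_inv_mul _ ((Matrix.isUnit_iff_isUnit_det _).mp hGunit), Matrix.mul_one]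
  funext k
  have hfix : (Gᵀ * (G * Gᵀ)⁻¹ * G).mulVec β = β := by rw [key, Matrix.one_mulVec]
  have hβk : β k = ((Gᵀ * (G * Gᵀ)⁻¹).mulVec (G.mulVec β)) k := by
    conv_lhs => rw [← hfix]
    rw [← Matrix.mulVec_mulVec]
  rw [hβk, hc, hH]
  simp only [Matrix.mulVec, dotProduct, Matrix.mul_apply, Matrix.transpose_apply,
    Pi.neg_apply, Finset.sum_apply, Pi.smul_apply, smul_eq_mul]
  rw [Finset.sum_comm]
  rw [← Finset.sum_neg_distrib]
  apply Finset.sum_congr rfl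
  intro i _
  rw [Finset.sum_mul, ← Finset.sum_neg_distrib]
  apply Finset.sum_congr rfl
  intro j _
  simp [hG]
  ring
end

section
/- Let a = B²â with â symmetric of determinant 1, b a vector field, u₁ a nowhere-vanishing solution, τ a nowhere-vanishing positive scalar, and set α_τ = τu₁²a, β_τ = τu₁²b + τ∇·(a u₁²). Then â α_τ⁻¹ (β_τ − ∇·α_τ) = b/B² − (∇ ln τ)·â, i.e., the left-hand side does not depend on u₁ and depends on τ only through ∇ ln τ. -/
open Matrix Finset

variable {n : ℕ}

private lemma pd_congr {f g : (Fin n → ℝ) → ℝ} {x : Fin n → ℝ} (h : f =ᶠ[nhds x] g)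
    (i : Fin n) : pd i f x = pd i g x := by
  unfold pd; rw [h.fderiv_eq]

private lemma pd_mul {f g : (Fin n → ℝ) → ℝ} {x : Fin n → ℝ}
    (hf : DifferentiableAt ℝ f x) (hg : DifferentiableAt ℝ g x) (i : Fin n) :
    pd i (fun y => f y * g y) x = pd i f x * g x + f x * pd i g x := by
  unfold pd
  rw [fderiv_fun_mul hf hg]
  simp
  ring

private lemma pd_log {f : (Fin n → ℝ) → ℝ} {x : Fin n → ℝ}
    (hf : DifferentiableAt ℝ f x) (h0 : f x ≠ 0) (i : Fin n) :
    pd i (fun y => Real.log (f y)) x = (f x)⁻¹ * pd i f x := by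
  unfold pd
  rw [(hf.hasFDerivAt.log h0).fderiv]
  simp

/-- with `a = B² â`, `α_τ = τ u₁² a`, `β_τ = τ u₁² b + τ ∇·(a u₁²)`, one has
`â α_τ⁻¹ (β_τ − ∇·α_τ) = b/B² − (∇ ln τ)·â`. -/
theorem stmt9 {n : ℕ} (X : Set (Fin n → ℝ)) (hX : IsOpen X)
    (B : (Fin n → ℝ) → ℝ) (hB_pos : ∀ x ∈ X, 0 < B x) (hB : ContDiffOn ℝ 1 B X)
    (aHat : (Fin n → ℝ) → Matrix (Fin n) (Fin n) ℝ)
    (haHat_symm : ∀ x ∈ X, (aHat x).IsSymm)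
    (haHat_pd : ∀ x ∈ X, (aHat x).PosDef)
    (haHat_det : ∀ x ∈ X, (aHat x).det = 1)
    (haHat : ∀ i j, ContDiffOn ℝ 1 (fun y => aHat y i j) X)
    (b : (Fin n → ℝ) → (Fin n → ℝ))
    (u₁ : (Fin n → ℝ) → ℝ) (hu₁ : ContDiffOn ℝ 1 u₁ X)
    (hu₁0 : ∀ x ∈ X, u₁ x ≠ 0)
    (τ : (Fin n → ℝ) → ℝ) (hτ_pos : ∀ x ∈ X, 0 < τ x) (hτ : ContDiffOn ℝ 1 τ X)
    (a : (Fin n → ℝ) → Matrix (Fin n) (Fin n) ℝ)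
    (ha : ∀ x ∈ X, a x = B x ^ 2 • aHat x)
    (ατ : (Fin n → ℝ) → Matrix (Fin n) (Fin n) ℝ)
    (hατ : ∀ x ∈ X, ατ x = (τ x * u₁ x ^ 2) • a x)
    (βτ : (Fin n → ℝ) → (Fin n → ℝ))
    (hβτ : ∀ x ∈ X, βτ x = (τ x * u₁ x ^ 2) • b x + τ x • mdiv (fun y => u₁ y ^ 2 • a y) x) :
    ∀ x ∈ X,
      aHat x *ᵥ ((ατ x)⁻¹ *ᵥ (βτ x - mdiv ατ x)) =
        (B x ^ 2)⁻¹ • b x - (grad (fun y => Real.log (τ y)) x) ᵥ* aHat x := by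
  intro x hx
  have hXn : X ∈ nhds x := hX.mem_nhds hx
  have hτd : DifferentiableAt ℝ τ x := (hτ.differentiableOn one_ne_zero).differentiableAt hXn
  have hu₁d : DifferentiableAt ℝ u₁ x := (hu₁.differentiableOn one_ne_zero).differentiableAt hXn
  have hBd : DifferentiableAt ℝ B x := (hB.differentiableOn one_ne_zero).differentiableAt hXn
  have haHatd : ∀ i j, DifferentiableAt ℝ (fun y => aHat y i j) x :=
    fun i j => (((haHat i j).differentiableOn one_ne_zero).differentiableAt hXn)
  have hτ0 : τ x ≠ 0 := (hτ_pos x hx).ne'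
  have hu0 : u₁ x ≠ 0 := hu₁0 x hx
  have hB0 : B x ≠ 0 := (hB_pos x hx).ne'
  set g : Fin n → Fin n → (Fin n → ℝ) → ℝ := fun i j y => u₁ y ^ 2 * (B y ^ 2 * aHat y i j)
    with hgdef
  have hgd : ∀ i j, DifferentiableAt ℝ (g i j) x := fun i j =>
    (hu₁d.pow 2).mul ((hBd.pow 2).mul (haHatd i j))
  -- mdiv ατ
  have hmdivατ : ∀ i, mdiv ατ x i = ∑ j, (pd j τ x * g i j x + τ x * pd j (g i j) x) := by
    intro i
    unfold mdiv
    refine Finset.sum_congr rfl fun j _ => ?_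
    have he : (fun y => ατ y i j) =ᶠ[nhds x] (fun y => τ y * g i j y) := by
      filter_upwards [hXn] with y hy
      rw [hατ y hy, ha y hy]
      simp [hgdef, Matrix.smul_apply]
      ring
    rw [pd_congr he, pd_mul hτd (hgd i j)]
  -- mdiv (u₁² a)
  have hmdiv2 : ∀ i, mdiv (fun y => u₁ y ^ 2 • a y) x i = ∑ j, pd j (g i j) x := by
    intro i
    unfold mdiv
    refine Finset.sum_congr rfl fun j _ => ?_
    have he : (fun y => (u₁ y ^ 2 • a y) i j) =ᶠ[nhds x] g i j := by
      filter_upwards [hXn] with y hy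
      rw [ha y hy]
      simp [hgdef, Matrix.smul_apply]
    rw [pd_congr he]
  -- the vector v
  have hv : βτ x - mdiv ατ x
      = (τ x * u₁ x ^ 2) • b x - (u₁ x ^ 2 * B x ^ 2) • (aHat x *ᵥ grad τ x) := by
    funext i
    have hgx : ∀ j, g i j x = u₁ x ^ 2 * (B x ^ 2 * aHat x i j) := fun j => rfl
    simp only [Pi.sub_apply, hβτ x hx, Pi.add_apply, Pi.smul_apply, smul_eq_mul,
      hmdivατ i, hmdiv2 i, Matrix.mulVec, dotProduct]
    rw [Finset.sum_add_distrib, ← Finset.mul_sum, Finset.mul_sum, Finset.mul_sum]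
    rw [show ∑ j, pd j τ x * g i j x = ∑ j, u₁ x ^ 2 * (B x ^ 2 * (aHat x i j * grad τ x j))
      from Finset.sum_congr rfl fun j _ => by rw [hgx j]; unfold grad; ring]
    ring
  set c : ℝ := τ x * u₁ x ^ 2 * B x ^ 2 with hcdef
  have hc : c ≠ 0 := by positivity
  have hατx : ατ x = c • aHat x := by
    rw [hατ x hx, ha x hx, smul_smul, hcdef, mul_assoc]
  have hdet : IsUnit (aHat x).det := by rw [haHat_det x hx]; exact isUnit_one
  letI : Invertible c := invertibleOfNonzero hc
  have hinv : (ατ x)⁻¹ = c⁻¹ • (aHat x)⁻¹ := by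
    rw [hατx, Matrix.inv_smul _ c hdet, invOf_eq_inv]
  rw [hinv, hv, Matrix.smul_mulVec, Matrix.mulVec_smul,
    Matrix.mulVec_mulVec, Matrix.mul_nonsing_inv _ hdet, Matrix.one_mulVec]
  -- RHS gradient of log
  have hgl : grad (fun y => Real.log (τ y)) x = (τ x)⁻¹ • grad τ x := by
    funext i
    simp only [grad, Pi.smul_apply, smul_eq_mul]
    exact pd_log hτd hτ0 i
  rw [hgl]
  funext i
  have hsymm := haHat_symm x hx
  simp only [Pi.smul_apply, Pi.sub_apply, smul_eq_mul, smul_sub, Matrix.vecMul,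
    Matrix.mulVec, dotProduct, Pi.smul_apply, smul_eq_mul]
  rw [show ∑ j, (τ x)⁻¹ * grad τ x j * aHat x j i
      = (τ x)⁻¹ * ∑ j, aHat x i j * grad τ x j by
    rw [Finset.mul_sum]; exact Finset.sum_congr rfl fun j _ => by
      rw [hsymm.apply i j]; ring]
  field_simp
  ring
end

section
/- Uniqueness of the reconstructed coefficient pair (α, β) up to scalar: suppose (α, β) and (α', β') are pairs of (symmetric matrix, vector) at a fixed point x such that α and α' are nonzero, both are orthogonal (w.r.t. Tr(AB)) to a family M¹,…,M^{Mₙ} of linearly independent symmetric matrices with Mₙ = n(n+1)/2 − 1, and both satisfy α : Hess v_j + β·∇v_j = 0 and α' : Hess v_j + β'·∇v_j = 0 for j = 1,…,n, where (∇v₁(x),…,∇vₙ(x)) is a basis of ℝⁿ. Then there exists a nonzero scalar λ with (α', β') = λ(α, β). -/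
open Matrix Finset Module

/-- The submodule of symmetric matrices. -/
def symSub (n : ℕ) : Submodule ℝ (Matrix (Fin n) (Fin n) ℝ) where
  carrier := {A | A.IsSymm}
  add_mem' := fun ha hb => ha.add hb
  zero_mem' := Matrix.isSymm_zero
  smul_mem' := fun c A hA => by
    simpa [Matrix.IsSymm, Matrix.transpose_smul] using congrArg (c • ·) hA

noncomputable def symEquiv (n : ℕ) :
    symSub n ≃ₗ[ℝ] ({ p : Fin n × Fin n // p.1 ≤ p.2 } → ℝ) :=
  LinearEquiv.ofLinear
    { toFun := fun A p => A.1 p.1.1 p.1.2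
      map_add' := fun A B => rfl
      map_smul' := fun c A => rfl }
    { toFun := fun f => ⟨Matrix.of fun i j => f ⟨(min i j, max i j), min_le_max⟩, by
        ext j i
        simp only [Matrix.transpose_apply, Matrix.of_apply, min_comm, max_comm]⟩
      map_add' := fun f g' => by apply Subtype.ext; ext i j; simp
      map_smul' := fun c f => by apply Subtype.ext; ext i j; simp }
    (by
      ext f p
      obtain ⟨⟨i, j⟩, hij⟩ := p
      have : (⟨(i ⊓ j, i ⊔ j), min_le_max⟩ : { p : Fin n × Fin n // p.1 ≤ p.2 }) = ⟨(i, j), hij⟩ := by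
        apply Subtype.ext
        simp [Prod.ext_iff, inf_eq_left.mpr hij, sup_eq_right.mpr hij]
      simp only [LinearMap.coe_comp, Function.comp_apply, LinearMap.coe_mk, AddHom.coe_mk,
        LinearMap.id_coe, id_eq, Matrix.of_apply, LinearMap.coe_single, Pi.single_apply]
      exact congrArg (fun q => if q = f then (1:ℝ) else 0) this)
    (by
      ext A i j
      rcases le_total i j with hij | hij
      · show (Matrix.of fun i j => A.1 (min i j) (max i j)) i j = A.1 i j
        simp [min_eq_left hij, max_eq_right hij]
      · have hs : (A.1).IsSymm := A.2
        show (Matrix.of fun i j => A.1 (min i j) (max i j)) i j = A.1 i j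
        simp [min_eq_right hij, max_eq_left hij, hs.apply])

theorem finrank_symSub (n : ℕ) : finrank ℝ (symSub n) = n * (n + 1) / 2 := by
  rw [(symEquiv n).finrank_eq]
  rw [finrank_pi ℝ]
  rw [← Fintype.card_congr (Sym2.sortEquiv (α := Fin n))]
  rw [Sym2.card]
  simp [Nat.choose_two_right, Nat.mul_comm]


/-- uniqueness up to a scalar of `(α, β)` at a fixed point: both pairs are
orthogonal to a family of `n(n+1)/2 − 1` linearly independent symmetric matrices and satisfy
the same linear constraints against a basis of gradients and the corresponding Hessians. -/
theorem stmt14 {n : ℕ} (hn : 1 ≤ n)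
    (M : Fin (n * (n + 1) / 2 - 1) → Matrix (Fin n) (Fin n) ℝ)
    (hM_symm : ∀ m, (M m).IsSymm) (hM_li : LinearIndependent ℝ M)
    (g : Fin n → (Fin n → ℝ)) (hg : LinearIndependent ℝ g)
    (h : Fin n → Matrix (Fin n) (Fin n) ℝ) (hh_symm : ∀ j, (h j).IsSymm)
    (α α' : Matrix (Fin n) (Fin n) ℝ) (β β' : Fin n → ℝ)
    (hα_symm : Matrix.IsSymm α) (hα'_symm : Matrix.IsSymm α')
    (hα0 : α ≠ 0) (hα'0 : α' ≠ 0)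
    (horth : ∀ m, Matrix.trace (α * M m) = 0)
    (horth' : ∀ m, Matrix.trace (α' * M m) = 0)
    (heq : ∀ j, Matrix.trace (α * h j) + β ⬝ᵥ g j = 0)
    (heq' : ∀ j, Matrix.trace (α' * h j) + β' ⬝ᵥ g j = 0) :
    ∃ lam : ℝ, lam ≠ 0 ∧ α' = lam • α ∧ β' = lam • β := by
  classical
  have hN1 : 1 ≤ n * (n + 1) / 2 := by
    rw [Nat.le_div_iff_mul_le (by norm_num)]
    nlinarith
  set S := symSub n with hS
  -- the trace bilinear form on symmetric matrices
  let B : LinearMap.BilinForm ℝ S := LinearMap.mk₂ ℝ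
    (fun A C => Matrix.trace ((A : Matrix (Fin n) (Fin n) ℝ) * (C : Matrix (Fin n) (Fin n) ℝ)))
    (fun A A' C => by simp [Matrix.add_mul])
    (fun c A C => by simp [Matrix.smul_mul])
    (fun A C C' => by simp [Matrix.mul_add])
    (fun c A C => by simp [Matrix.mul_smul])
  have hBapp : ∀ A C : S, B A C =
      Matrix.trace ((A : Matrix (Fin n) (Fin n) ℝ) * (C : Matrix (Fin n) (Fin n) ℝ)) :=
    fun A C => rfl
  have hBrefl : B.IsRefl := by
    intro A C hAC
    rw [hBapp] at hAC ⊢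
    rwa [Matrix.trace_mul_comm]
  have hBnd : B.Nondegenerate := by
    refine (LinearMap.IsRefl.nondegenerate_iff_separatingLeft hBrefl).2 ?_
    intro A hA
    have h0 := hA A
    rw [hBapp] at h0
    have hsym : (A : Matrix (Fin n) (Fin n) ℝ).IsSymm := A.2
    have htr : Matrix.trace ((A : Matrix (Fin n) (Fin n) ℝ) * (A : Matrix (Fin n) (Fin n) ℝ)) =
        ∑ i, ∑ j, ((A : Matrix (Fin n) (Fin n) ℝ) i j) ^ 2 := by
      simp only [Matrix.trace, Matrix.diag, Matrix.mul_apply]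
      refine Finset.sum_congr rfl fun i _ => Finset.sum_congr rfl fun j _ => ?_
      rw [hsym.apply i j, sq]
    rw [htr] at h0
    have hall : ∀ i ∈ Finset.univ, ∀ j ∈ (Finset.univ : Finset (Fin n)),
        ((A : Matrix (Fin n) (Fin n) ℝ) i j) ^ 2 = 0 := by
      have := (Finset.sum_eq_zero_iff_of_nonneg (fun i _ =>
        Finset.sum_nonneg fun j _ => sq_nonneg _)).1 h0
      intro i hi j hj
      exact (Finset.sum_eq_zero_iff_of_nonneg (fun j _ => sq_nonneg _)).1 (this i hi) j hj
    apply Subtype.ext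
    ext i j
    simpa using pow_eq_zero_iff (n := 2) (by norm_num) |>.1 (hall i (Finset.mem_univ i) j (Finset.mem_univ j))
  -- the span of the M family inside S
  let M' : Fin (n * (n + 1) / 2 - 1) → S := fun m => ⟨M m, hM_symm m⟩
  have hM'_li : LinearIndependent ℝ M' :=
    LinearIndependent.of_comp S.subtype (by exact hM_li)
  let W : Submodule ℝ S := Submodule.span ℝ (Set.range M')
  have hWrank : finrank ℝ W = n * (n + 1) / 2 - 1 := by
    rw [finrank_span_eq_card hM'_li, Fintype.card_fin]
  have hKrank : finrank ℝ (B.orthogonal W) = 1 := by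
    rw [LinearMap.BilinForm.finrank_orthogonal hBnd, hWrank, finrank_symSub]
    omega
  -- both α and α' lie in the orthogonal complement
  have hmemK : ∀ (a : Matrix (Fin n) (Fin n) ℝ) (ha : a.IsSymm),
      (∀ m, Matrix.trace (a * M m) = 0) → (⟨a, ha⟩ : S) ∈ B.orthogonal W := by
    intro a ha horth
    rw [LinearMap.BilinForm.mem_orthogonal_iff]
    intro y hy
    induction hy using Submodule.span_induction with
    | mem z hz =>
        obtain ⟨m, rfl⟩ := hz
        show B (M' m) ⟨a, ha⟩ = 0
        rw [hBapp]
        show Matrix.trace (M m * a) = 0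
        rw [Matrix.trace_mul_comm]
        exact horth m
    | zero => simp [LinearMap.BilinForm.IsOrtho]
    | add y z _ _ hy hz =>
        have hy' : B y ⟨a, ha⟩ = 0 := hy
        have hz' : B z ⟨a, ha⟩ = 0 := hz
        show B (y + z) ⟨a, ha⟩ = 0
        rw [map_add, LinearMap.add_apply, hy', hz', add_zero]
    | smul c y _ hy =>
        have hy' : B y ⟨a, ha⟩ = 0 := hy
        show B (c • y) ⟨a, ha⟩ = 0
        rw [LinearMap.map_smul, LinearMap.smul_apply, hy', smul_zero]
  have hαK : (⟨α, hα_symm⟩ : S) ∈ B.orthogonal W := hmemK α hα_symm horth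
  have hα'K : (⟨α', hα'_symm⟩ : S) ∈ B.orthogonal W := hmemK α' hα'_symm horth'
  have hαne : (⟨α, hα_symm⟩ : S) ≠ 0 := fun hc => hα0 (congrArg Subtype.val hc)
  have hspan : (ℝ ∙ (⟨α, hα_symm⟩ : S)) = B.orthogonal W := by
    apply Submodule.eq_of_le_of_finrank_le
    · rw [Submodule.span_singleton_le_iff_mem]; exact hαK
    · rw [hKrank, finrank_span_singleton hαne]
  have hmem : (⟨α', hα'_symm⟩ : S) ∈ (ℝ ∙ (⟨α, hα_symm⟩ : S)) := hspan ▸ hα'K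
  obtain ⟨lam, hlam⟩ := Submodule.mem_span_singleton.1 hmem
  have hαeq : α' = lam • α := by
    have := congrArg Subtype.val hlam
    simpa using this.symm
  have hlam0 : lam ≠ 0 := by
    rintro rfl
    exact hα'0 (by simp [hαeq])
  refine ⟨lam, hlam0, hαeq, ?_⟩
  -- now the β part
  have hdot : ∀ j, (β' - lam • β) ⬝ᵥ g j = 0 := by
    intro j
    have h1 := heq j
    have h2 := heq' j
    rw [hαeq, Matrix.smul_mul, Matrix.trace_smul] at h2
    rw [sub_dotProduct, smul_dotProduct]
    simp only [smul_eq_mul] at h2 ⊢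
    linear_combination h2 - lam * h1
  haveI : Nonempty (Fin n) := ⟨⟨0, hn⟩⟩
  let b : Basis (Fin n) ℝ (Fin n → ℝ) :=
    basisOfLinearIndependentOfCardEqFinrank hg (by simp)
  let φ : (Fin n → ℝ) →ₗ[ℝ] ℝ :=
    { toFun := fun v => (β' - lam • β) ⬝ᵥ v
      map_add' := fun x y => dotProduct_add _ x y
      map_smul' := fun c x => dotProduct_smul c _ x }
  have hφ : φ = 0 := by
    apply b.ext
    intro j
    have hb : b j = g j :=
      congrFun (coe_basisOfLinearIndependentOfCardEqFinrank hg (by simp)) j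
    show (β' - lam • β) ⬝ᵥ b j = (0 : (Fin n → ℝ) →ₗ[ℝ] ℝ) (b j)
    rw [hb, hdot j]
    simp
  have hw : β' - lam • β = 0 := by
    funext i
    have := congrArg (fun f => (f : (Fin n → ℝ) →ₗ[ℝ] ℝ) (Pi.single i 1)) hφ
    simpa [φ, dotProduct_single] using this
  exact sub_eq_zero.1 hw
end
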